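/- arXiv:0707.4007 — 2 statements merged into one kernel-verified Lean document; each statement's English description precedes it below -/
import Mathlib

section
/- Suppose that G_0^p and G_{n−1}^p are string C-groups, that the subspace V_{0,n−1} is nonsingular, and that G_{0,n−1}^p is the full orthogonal group O(V_{0,n−1}) on V_{0,n−1} (identified with a subgroup of O(V)). Then G^p is a string C-group. -/
/- Setup: reduction mod an odd prime `p` of a crystallographic Coxeter group
`G = ⟨r₀, …, r_{n−1}⟩` with string diagram and Gram matrix `B`. -/

namespace Statement1

variable (n p : ℕ)

/-- `V = (ZMod p)^n`. -/
abbrev V := Fin n → ZMod p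

/-- The general linear group of `V`. -/
abbrev GLV := (Module.End (ZMod p) (V n p))ˣ

/-- Reduction of a rational number mod `p` (meaningful when the denominator is prime to `p`). -/
def redQ (q : ℚ) : ZMod p := (q.num : ZMod p) * ((q.den : ZMod p))⁻¹

/-- The standard basis vector `b_i`. -/
def basisVec (i : Fin n) : V n p := Pi.single i 1

/-- The symmetric bilinear form on `V` obtained by reducing the Gram matrix `B` mod `p`. -/
def form (B : Matrix (Fin n) (Fin n) ℚ) (x y : V n p) : ZMod p :=
  ∑ i, ∑ j, x i * redQ p (B i j) * y j

/-- `B` is the Gram matrix of a basic system for a crystallographic Coxeter group with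
string diagram: symmetric, tridiagonal, positive integer node labels, integer Cartan
entries, and branch condition `4 B_{i-1,i}² = c ⬝ B_{i-1,i-1} ⬝ B_{ii}` with `c ∈ {1,2,3,4}`
(or `B_{i-1,i} = 0`, i.e. an absent branch). -/
def GramOK (B : Matrix (Fin n) (Fin n) ℚ) : Prop :=
  (∀ i j, B i j = B j i) ∧
  (∀ i j : Fin n, 1 < |(i : ℤ) - (j : ℤ)| → B i j = 0) ∧
  (∀ i, ∃ m : ℕ, 0 < m ∧ B i i = m) ∧
  (∀ i j, ∃ c : ℤ, 2 * B i j / B i i = (c : ℚ)) ∧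
  (∀ i : Fin n, ∀ h : (i : ℕ) + 1 < n,
    B i ⟨(i : ℕ) + 1, h⟩ = 0 ∨
      ∃ c : ℕ, 1 ≤ c ∧ c ≤ 4 ∧
        4 * (B i ⟨(i : ℕ) + 1, h⟩) ^ 2 = c * B i i * B ⟨(i : ℕ) + 1, h⟩ ⟨(i : ℕ) + 1, h⟩)

/-- All entries of `B` are `p`-integral. -/
def PIntegral (B : Matrix (Fin n) (Fin n) ℚ) : Prop :=
  ∀ i j, ¬ (p ∣ (B i j).den)

/-- `p` is generic for `G`: either `p ≥ 5`, or `p = 3` and no branch is labelled `6`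
(a branch `{i, i+1}` is labelled `6` exactly when `4 B_{i,i+1}² = 3 ⬝ B_{ii} ⬝ B_{i+1,i+1}`). -/
def Generic (B : Matrix (Fin n) (Fin n) ℚ) : Prop :=
  5 ≤ p ∨ (p = 3 ∧ ∀ i : Fin n, ∀ h : (i : ℕ) + 1 < n,
    4 * (B i ⟨(i : ℕ) + 1, h⟩) ^ 2 ≠ 3 * B i i * B ⟨(i : ℕ) + 1, h⟩ ⟨(i : ℕ) + 1, h⟩)

/-- `r i` is the reduction mod `p` of the generating reflection `r_i`, determined by its
action on the standard basis: `r_i(b_j) = b_j − C_{ij} b_i` with `C_{ij} = 2 B_{ij}/B_{ii}`. -/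
def ReflHyp (B : Matrix (Fin n) (Fin n) ℚ) (r : Fin n → GLV n p) : Prop :=
  ∀ i j : Fin n, (r i).1 (basisVec n p j) =
    basisVec n p j - redQ p (2 * B i j / B i i) • basisVec n p i

/-- The intersection property (string C-group condition) for the subgroups generated by
the reflections `r i`, `i ∈ S`. -/
def IsStringC (r : Fin n → GLV n p) (S : Set (Fin n)) : Prop :=
  ∀ I J : Set (Fin n), I ⊆ S → J ⊆ S →
    Subgroup.closure (r '' I) ⊓ Subgroup.closure (r '' J) = Subgroup.closure (r '' (I ∩ J))

/-- The span of the basis vectors `b_i`, `i ∈ S`. -/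
def spanV (S : Set (Fin n)) : Submodule (ZMod p) (V n p) :=
  Submodule.span (ZMod p) (basisVec n p '' S)

/-- The subspace `W` is nonsingular: the restriction of the form to `W` is nondegenerate. -/
def Nonsing (B : Matrix (Fin n) (Fin n) ℚ) (W : Submodule (ZMod p) (V n p)) : Prop :=
  ∀ x ∈ W, (∀ y ∈ W, form n p B x y = 0) → x = 0

/-- The full orthogonal group `O(V)` of the form, as a subgroup of `GL(V)`. -/
def OV (B : Matrix (Fin n) (Fin n) ℚ) : Subgroup (GLV n p) where
  carrier := {g | ∀ x y, form n p B (g.1 x) (g.1 y) = form n p B x y}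
  one_mem' := by intro x y; simp
  mul_mem' := by
    intro a b ha hb x y
    simpa [Units.val_mul] using (ha (b.1 x) (b.1 y)).trans (hb x y)
  inv_mem' := by
    intro a ha x y
    have key : ∀ z, a.1 ((a⁻¹ : GLV n p).1 z) = z := by
      intro z
      rw [← Module.End.mul_apply, ← Units.val_mul, mul_inv_cancel, Units.val_one,
        Module.End.one_apply]
    have h := ha ((a⁻¹ : GLV n p).1 x) ((a⁻¹ : GLV n p).1 y)
    rw [key, key] at h
    exact h.symm

/-- `g` fixes `W^⊥` pointwise. -/
def perpFix (B : Matrix (Fin n) (Fin n) ℚ) (W : Submodule (ZMod p) (V n p))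
    (g : GLV n p) : Prop :=
  ∀ u : V n p, (∀ w ∈ W, form n p B u w = 0) → g.1 u = u

/-- `O(W)` identified with the subgroup `{g ∈ O(V) : g(W) = W, g fixes W^⊥ pointwise}`
of `O(V)`. -/
def OSub (B : Matrix (Fin n) (Fin n) ℚ) (W : Submodule (ZMod p) (V n p)) :
    Subgroup (GLV n p) where
  carrier := {g | g ∈ OV n p B ∧ Submodule.map g.1 W = W ∧ perpFix n p B W g}
  one_mem' := by
    refine ⟨(OV n p B).one_mem, ?_, fun u _ => by simp⟩
    simp [Module.End.one_eq_id]
  mul_mem' := by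
    rintro a b ⟨ha1, ha2, ha3⟩ ⟨hb1, hb2, hb3⟩
    refine ⟨mul_mem ha1 hb1, ?_, ?_⟩
    · rw [Units.val_mul, Module.End.mul_eq_comp, Submodule.map_comp, hb2, ha2]
    · intro u hu
      rw [Units.val_mul, Module.End.mul_apply, hb3 u hu, ha3 u hu]
  inv_mem' := by
    rintro a ⟨ha1, ha2, ha3⟩
    have key : ∀ z, (a⁻¹ : GLV n p).1 (a.1 z) = z := fun z => by
      rw [← Module.End.mul_apply, ← Units.val_mul, inv_mul_cancel, Units.val_one,
        Module.End.one_apply]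
    refine ⟨(OV n p B).inv_mem ha1, ?_, ?_⟩
    · conv_lhs => rw [← ha2]
      rw [← Submodule.map_comp, ← Module.End.mul_eq_comp, ← Units.val_mul, inv_mul_cancel,
        Units.val_one, Module.End.one_eq_id]
      simp
    · intro u hu
      conv_lhs => rw [← ha3 u hu]
      exact key u

/-- `g` is the reflection `r_a` with root `a ∈ W`, where `a·a` is a nonzero square. -/
def IsSqRefl (B : Matrix (Fin n) (Fin n) ℚ) (W : Submodule (ZMod p) (V n p))
    (g : GLV n p) : Prop :=
  ∃ a ∈ W, (∃ t : ZMod p, t ≠ 0 ∧ form n p B a a = t ^ 2) ∧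
    ∀ x, g.1 x = x - (2 * form n p B x a * (form n p B a a)⁻¹) • a

/-- `g` is the reflection `r_a` with root `a ∈ W`, where `a·a` is a nonsquare. -/
def IsNonsqRefl (B : Matrix (Fin n) (Fin n) ℚ) (W : Submodule (ZMod p) (V n p))
    (g : GLV n p) : Prop :=
  ∃ a ∈ W, (∀ t : ZMod p, form n p B a a ≠ t ^ 2) ∧
    ∀ x, g.1 x = x - (2 * form n p B x a * (form n p B a a)⁻¹) • a

/-- `O₁(W)` (resp. `Ô₁(W)` when `W` is singular): the subgroup generated by all
reflections `r_a` with root `a ∈ W` of square norm. -/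
def O1 (B : Matrix (Fin n) (Fin n) ℚ) (W : Submodule (ZMod p) (V n p)) :
    Subgroup (GLV n p) :=
  Subgroup.closure {g | IsSqRefl n p B W g}

/-- `O₂(W)`: the subgroup generated by all reflections `r_a` with root `a ∈ W`
of nonsquare norm. -/
def O2 (B : Matrix (Fin n) (Fin n) ℚ) (W : Submodule (ZMod p) (V n p)) :
    Subgroup (GLV n p) :=
  Subgroup.closure {g | IsNonsqRefl n p B W g}

/-- `H` is of orthogonal type on the (nonsingular) subspace `W`. -/
def OrthType (B : Matrix (Fin n) (Fin n) ℚ) (W : Submodule (ZMod p) (V n p))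
    (H : Subgroup (GLV n p)) : Prop :=
  H = OSub n p B W ∨ H = O1 n p B W ∨ H = O2 n p B W

/-!
Non-adjacent generators commute, so omitting a node `k` from `I` writes `⟨r_i : i ∈ I⟩` as the
commuting product of the subgroups generated by the nodes of `I` below and above `k`; the part
above `k` avoids the first node and the part below avoids the last one. This reduces every
intersection `G_I ∩ G_J` to intersections inside `G_0` or `G_{n-1}`, where the intersection
property is assumed, provided `G_0 ∩ G_{n-1} = G_{0,n-1}`.

That equality is where the geometry enters. An element of `G_0 ∩ G_{n-1}` moves every vector only
by an element of `V_0 ∩ V_{n-1} = V_{0,n-1}`. Being an isometry, it therefore preserves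
`V_{0,n-1}` and moves each vector of `V_{0,n-1}^⊥` by a vector of
`V_{0,n-1} ∩ V_{0,n-1}^⊥ = 0`, so it lies in `O(V_{0,n-1}) = G_{0,n-1}`.
-/

section IntersectionProperty

variable {G ι : Type*} [Group G]

def IntersectionProperty (r : ι → G) (S : Set ι) : Prop :=
  ∀ I J : Set ι, I ⊆ S → J ⊆ S →
    Subgroup.closure (r '' I) ⊓ Subgroup.closure (r '' J) = Subgroup.closure (r '' (I ∩ J))

lemma exists_mul_eq_of_mem_closure_union {s t : Set G}
    (h : ∀ a ∈ s, ∀ b ∈ t, Commute a b) {g : G} (hg : g ∈ Subgroup.closure (s ∪ t)) :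
    ∃ a ∈ Subgroup.closure s, ∃ b ∈ Subgroup.closure t, a * b = g := by
  have hle : Subgroup.closure s ≤ Subgroup.normalizer (Subgroup.closure t : Set G) := by
    refine le_trans ?_ (Subgroup.centralizer_le_normalizer _)
    rw [Subgroup.centralizer_closure, Subgroup.closure_le]
    exact fun a ha => Subgroup.mem_centralizer_iff.2 fun b hb => (h a ha b hb).symm
  rwa [Subgroup.closure_union, ← SetLike.mem_coe,
    Subgroup.coe_mul_of_left_le_normalizer_right _ _ hle] at hg

lemma closure_image_mono (r : ι → G) {I J : Set ι} (h : I ⊆ J) :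
    Subgroup.closure (r '' I) ≤ Subgroup.closure (r '' J) :=
  Subgroup.closure_mono (Set.image_mono h)

lemma closure_image_inter_le (r : ι → G) (I J : Set ι) :
    Subgroup.closure (r '' (I ∩ J)) ≤ Subgroup.closure (r '' I) ⊓ Subgroup.closure (r '' J) :=
  le_inf (closure_image_mono r Set.inter_subset_left) (closure_image_mono r Set.inter_subset_right)

lemma IntersectionProperty.inf_closure_image_eq_of_subset {r : ι → G} {S I J : Set ι}
    (hS : IntersectionProperty r S)
    (hIS : Subgroup.closure (r '' I) ⊓ Subgroup.closure (r '' S) =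
      Subgroup.closure (r '' (I ∩ S)))
    (hJ : J ⊆ S) :
    Subgroup.closure (r '' I) ⊓ Subgroup.closure (r '' J) = Subgroup.closure (r '' (I ∩ J)) :=
  calc Subgroup.closure (r '' I) ⊓ Subgroup.closure (r '' J)
      = Subgroup.closure (r '' I) ⊓ Subgroup.closure (r '' S) ⊓ Subgroup.closure (r '' J) := by
        rw [inf_assoc, inf_eq_right.2 (closure_image_mono r hJ)]
    _ = Subgroup.closure (r '' (I ∩ J)) := by
        rw [hIS, hS _ J Set.inter_subset_right hJ, Set.inter_assoc, Set.inter_eq_right.2 hJ]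

variable [LinearOrder ι]

def CommutesWhenSeparated (r : ι → G) : Prop :=
  ∀ i k j, i < k → k < j → Commute (r i) (r j)

lemma CommutesWhenSeparated.dual {r : ι → G} (hcomm : CommutesWhenSeparated r) :
    CommutesWhenSeparated (ι := ιᵒᵈ) r :=
  fun i k j hik hkj => (hcomm j k i hkj hik).symm

lemma CommutesWhenSeparated.exists_mul_eq {r : ι → G} (hcomm : CommutesWhenSeparated r)
    {I : Set ι} {k : ι} (hk : k ∉ I) {g : G} (hg : g ∈ Subgroup.closure (r '' I)) :
    ∃ a ∈ Subgroup.closure (r '' {i ∈ I | i < k}),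
      ∃ b ∈ Subgroup.closure (r '' {i ∈ I | k < i}), a * b = g := by
  have hI : I = {i ∈ I | i < k} ∪ {i ∈ I | k < i} := by
    ext i
    refine ⟨fun hi => ?_, by rintro (⟨hi, -⟩ | ⟨hi, -⟩) <;> exact hi⟩
    rcases lt_trichotomy i k with h | rfl | h
    exacts [Or.inl ⟨hi, h⟩, absurd hi hk, Or.inr ⟨hi, h⟩]
  rw [hI, Set.image_union] at hg
  refine exists_mul_eq_of_mem_closure_union ?_ hg
  rintro _ ⟨i, hi, rfl⟩ _ ⟨j, hj, rfl⟩
  exact hcomm i k j hi.2 hj.2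

lemma inf_closure_image_setOf_not_isMin {r : ι → G} (hcomm : CommutesWhenSeparated r)
    (hB : IntersectionProperty r {i | ¬IsMax i})
    (hAB : Subgroup.closure (r '' {i | ¬IsMin i}) ⊓ Subgroup.closure (r '' {i | ¬IsMax i}) =
      Subgroup.closure (r '' ({i | ¬IsMin i} ∩ {i | ¬IsMax i})))
    (I : Set ι) :
    Subgroup.closure (r '' I) ⊓ Subgroup.closure (r '' {i | ¬IsMin i}) =
      Subgroup.closure (r '' (I ∩ {i | ¬IsMin i})) := by
  refine le_antisymm (fun g hg => ?_) (closure_image_inter_le r _ _)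
  rw [Subgroup.mem_inf] at hg
  by_cases hI : I = Set.univ
  · rw [hI, Set.univ_inter]
    exact hg.2
  obtain ⟨k, hk⟩ := (Set.ne_univ_iff_exists_notMem I).1 hI
  obtain ⟨a, ha, b, hb, rfl⟩ := hcomm.exists_mul_eq hk hg.1
  have hbA : {i ∈ I | k < i} ⊆ {i | ¬IsMin i} := fun i hi => hi.2.not_isMin
  have haB : {i ∈ I | i < k} ⊆ {i | ¬IsMax i} := fun i hi => hi.2.not_isMax
  have ha' : a ∈ Subgroup.closure (r '' ({i ∈ I | i < k} ∩ {i | ¬IsMin i})) := by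
    rw [Set.inter_comm, ← hB.inf_closure_image_eq_of_subset hAB haB]
    exact Subgroup.mem_inf.2
      ⟨mul_inv_cancel_right a b ▸ mul_mem hg.2 (inv_mem (closure_image_mono r hbA hb)), ha⟩
  refine mul_mem (closure_image_mono r ?_ ha') (closure_image_mono r ?_ hb)
  exacts [fun i hi => ⟨hi.1.1, hi.2⟩, fun i hi => ⟨hi.1, hbA hi⟩]

lemma inf_closure_image_eq_of_subset_setOf_not_isMin {r : ι → G}
    (hcomm : CommutesWhenSeparated r)
    (hA : IntersectionProperty r {i | ¬IsMin i}) (hB : IntersectionProperty r {i | ¬IsMax i})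
    (hAB : Subgroup.closure (r '' {i | ¬IsMin i}) ⊓ Subgroup.closure (r '' {i | ¬IsMax i}) =
      Subgroup.closure (r '' ({i | ¬IsMin i} ∩ {i | ¬IsMax i})))
    {I J : Set ι} (hJ : J ⊆ {i | ¬IsMin i}) :
    Subgroup.closure (r '' I) ⊓ Subgroup.closure (r '' J) = Subgroup.closure (r '' (I ∩ J)) :=
  hA.inf_closure_image_eq_of_subset (inf_closure_image_setOf_not_isMin hcomm hB hAB I) hJ

lemma inf_closure_image_eq_of_subset_setOf_not_isMax {r : ι → G}
    (hcomm : CommutesWhenSeparated r)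
    (hA : IntersectionProperty r {i | ¬IsMin i}) (hB : IntersectionProperty r {i | ¬IsMax i})
    (hAB : Subgroup.closure (r '' {i | ¬IsMin i}) ⊓ Subgroup.closure (r '' {i | ¬IsMax i}) =
      Subgroup.closure (r '' ({i | ¬IsMin i} ∩ {i | ¬IsMax i})))
    {I J : Set ι} (hJ : J ⊆ {i | ¬IsMax i}) :
    Subgroup.closure (r '' I) ⊓ Subgroup.closure (r '' J) = Subgroup.closure (r '' (I ∩ J)) :=
  inf_closure_image_eq_of_subset_setOf_not_isMin (ι := ιᵒᵈ) hcomm.dual hB hA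
    (by rw [inf_comm, Set.inter_comm]; exact hAB) hJ

lemma inter_subset_of_le {I J : Set ι} {k l : ι} (hkl : k ≤ l) :
    ({i ∈ I | i < k} ∪ {i ∈ J | i < l}) ∩ ({i ∈ I | k < i} ∪ {i ∈ J | l < i}) ⊆
      {i ∈ I | k < i} ∩ {i ∈ J | i < l} := by
  rintro i ⟨hi | hi, hi' | hi'⟩
  · exact absurd (hi.2.trans hi'.2) (lt_irrefl i)
  · exact absurd ((hi.2.trans_le hkl).trans hi'.2) (lt_irrefl i)
  · exact ⟨hi', hi⟩
  · exact absurd (hi.2.trans hi'.2) (lt_irrefl i)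

lemma inf_closure_image_le_of_notMem_of_le {r : ι → G} (hcomm : CommutesWhenSeparated r)
    (hA : IntersectionProperty r {i | ¬IsMin i}) (hB : IntersectionProperty r {i | ¬IsMax i})
    (hAB : Subgroup.closure (r '' {i | ¬IsMin i}) ⊓ Subgroup.closure (r '' {i | ¬IsMax i}) =
      Subgroup.closure (r '' ({i | ¬IsMin i} ∩ {i | ¬IsMax i})))
    {I J : Set ι} {k l : ι} (hk : k ∉ I) (hl : l ∉ J) (hkl : k ≤ l) :
    Subgroup.closure (r '' I) ⊓ Subgroup.closure (r '' J) ≤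
      Subgroup.closure (r '' (I ∩ J)) := by
  intro g hg
  rw [Subgroup.mem_inf] at hg
  obtain ⟨g₁, hg₁, g₂, hg₂, rfl⟩ := hcomm.exists_mul_eq hk hg.1
  obtain ⟨h₁, hh₁, h₂, hh₂, hh⟩ := hcomm.exists_mul_eq hl hg.2
  have hx : h₁⁻¹ * g₁ = h₂ * g₂⁻¹ := by
    rw [inv_mul_eq_iff_eq_mul, ← mul_assoc, hh, mul_inv_cancel_right]
  -- `h₁⁻¹ g₁ = h₂ g₂⁻¹` is generated both by nodes below `k` or `l` and by nodes above
  -- them, and the latter avoid the minimum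
  have hx_mem :
      h₁⁻¹ * g₁ ∈ Subgroup.closure (r '' ({i ∈ I | k < i} ∩ {i ∈ J | i < l})) := by
    have hsub : {i ∈ I | k < i} ∪ {i ∈ J | l < i} ⊆ {i | ¬IsMin i} := by
      rintro i (hi | hi)
      exacts [hi.2.not_isMin, hi.2.not_isMin]
    have h₁₂ := Subgroup.mem_inf.2
      ⟨mul_mem (closure_image_mono r Set.subset_union_right (inv_mem hh₁))
        (closure_image_mono r Set.subset_union_left hg₁),
       hx ▸ mul_mem (closure_image_mono r Set.subset_union_right hh₂)
        (closure_image_mono r Set.subset_union_left (inv_mem hg₂))⟩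
    rw [inf_closure_image_eq_of_subset_setOf_not_isMin hcomm hA hB hAB hsub] at h₁₂
    exact closure_image_mono r (inter_subset_of_le hkl) h₁₂
  have hh₁_mem : h₁ ∈ Subgroup.closure (r '' (I ∩ {i ∈ J | i < l})) := by
    rw [← inf_closure_image_eq_of_subset_setOf_not_isMax hcomm hA hB hAB
      (fun i hi => hi.2.not_isMax)]
    refine Subgroup.mem_inf.2 ⟨?_, hh₁⟩
    rw [show h₁ = g₁ * (h₁⁻¹ * g₁)⁻¹ by group]
    exact mul_mem (closure_image_mono r (fun i hi => hi.1) hg₁)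
      (inv_mem (closure_image_mono r (fun i hi => hi.1.1) hx_mem))
  have hg₂_mem : g₂ ∈ Subgroup.closure (r '' ({i ∈ I | k < i} ∩ J)) := by
    rw [Set.inter_comm, ← inf_closure_image_eq_of_subset_setOf_not_isMin hcomm hA hB hAB
      (fun i hi => hi.2.not_isMin)]
    refine Subgroup.mem_inf.2 ⟨?_, hg₂⟩
    rw [show g₂ = (h₁⁻¹ * g₁)⁻¹ * h₂ by rw [hx]; group]
    exact mul_mem (inv_mem (closure_image_mono r (fun i hi => hi.2.1) hx_mem))
      (closure_image_mono r (fun i hi => hi.1) hh₂)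
  rw [show g₁ * g₂ = h₁ * (h₁⁻¹ * g₁) * g₂ by group]
  refine mul_mem (mul_mem (closure_image_mono r ?_ hh₁_mem) (closure_image_mono r ?_ hx_mem))
    (closure_image_mono r ?_ hg₂_mem)
  exacts [fun i hi => ⟨hi.1, hi.2.1⟩, fun i hi => ⟨hi.1.1, hi.2.1⟩,
    fun i hi => ⟨hi.1.1, hi.2⟩]

theorem intersectionProperty_univ {r : ι → G} (hcomm : CommutesWhenSeparated r)
    (hA : IntersectionProperty r {i | ¬IsMin i}) (hB : IntersectionProperty r {i | ¬IsMax i})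
    (hAB : Subgroup.closure (r '' {i | ¬IsMin i}) ⊓ Subgroup.closure (r '' {i | ¬IsMax i}) =
      Subgroup.closure (r '' ({i | ¬IsMin i} ∩ {i | ¬IsMax i}))) :
    IntersectionProperty r Set.univ := by
  intro I J _ _
  refine le_antisymm ?_ (closure_image_inter_le r I J)
  by_cases hI : I = Set.univ
  · rw [hI, Set.univ_inter]
    exact inf_le_right
  by_cases hJ : J = Set.univ
  · rw [hJ, Set.inter_univ]
    exact inf_le_left
  obtain ⟨k, hk⟩ := (Set.ne_univ_iff_exists_notMem I).1 hI
  obtain ⟨l, hl⟩ := (Set.ne_univ_iff_exists_notMem J).1 hJ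
  rcases le_total k l with hkl | hlk
  · exact inf_closure_image_le_of_notMem_of_le hcomm hA hB hAB hk hl hkl
  · rw [inf_comm, Set.inter_comm]
    exact inf_closure_image_le_of_notMem_of_le hcomm hA hB hAB hl hk hlk

end IntersectionProperty

section TrivialOnQuotient

variable {R M : Type*} [Ring R] [AddCommGroup M] [Module R M]

lemma units_apply_inv_apply (g : (Module.End R M)ˣ) (x : M) : g.1 ((g⁻¹).1 x) = x :=
  LinearMap.congr_fun g.mul_inv x

def trivialOnQuotient (W : Submodule R M) : Subgroup (Module.End R M)ˣ where
  carrier := {g | ∀ x, g.1 x - x ∈ W}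
  one_mem' x := by simp
  mul_mem' {a b} ha hb x := by
    simpa using add_mem (ha (b.1 x)) (hb x)
  inv_mem' {a} ha x := by
    simpa [units_apply_inv_apply] using neg_mem (ha ((a⁻¹).1 x))

lemma apply_mem_of_mem_trivialOnQuotient {W : Submodule R M} {g : (Module.End R M)ˣ}
    (hg : g ∈ trivialOnQuotient W) {w : M} (hw : w ∈ W) : g.1 w ∈ W := by
  simpa using add_mem hw (hg w)

lemma map_eq_of_mem_trivialOnQuotient {W : Submodule R M} {g : (Module.End R M)ˣ}
    (hg : g ∈ trivialOnQuotient W) : W.map g.1 = W := by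
  refine le_antisymm ?_ fun w hw => ⟨(g⁻¹).1 w, ?_, units_apply_inv_apply g w⟩
  · rintro _ ⟨w, hw, rfl⟩
    exact apply_mem_of_mem_trivialOnQuotient hg hw
  · exact apply_mem_of_mem_trivialOnQuotient (inv_mem hg) hw

end TrivialOnQuotient

section Reduction

variable {n p}

lemma redQ_eq_cast [Fact p.Prime] (q : ℚ) : redQ p q = (q : ZMod p) := by
  rw [redQ, Rat.cast_def, div_eq_mul_inv]

lemma two_mul_redQ [Fact p.Prime] {B : Matrix (Fin n) (Fin n) ℚ} (hB : GramOK n B)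
    (hint : PIntegral n p B) (i j : Fin n) :
    2 * redQ p (B i j) = redQ p (2 * B i j / B i i) * redQ p (B i i) := by
  obtain ⟨c, hc⟩ := hB.2.2.2.1 i j
  obtain ⟨m, hm, hBii⟩ := hB.2.2.1 i
  have hq : 2 * B i j = ((c * m : ℤ) : ℚ) := by
    rw [hBii, div_eq_iff (Nat.cast_ne_zero.2 hm.ne')] at hc
    push_cast
    exact hc
  have hden : ((B i j).den : ZMod p) ≠ 0 := by
    rw [Ne, ZMod.natCast_eq_zero_iff]
    exact hint i j
  rw [hc, hBii, redQ_eq_cast, redQ_eq_cast, redQ_eq_cast, ← Rat.cast_ofNat,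
    ← Rat.cast_mul_of_ne_zero (by simp) hden, hq, Rat.cast_intCast, Rat.cast_intCast,
    Rat.cast_natCast]
  push_cast
  ring

lemma form_eq_toBilin' (B : Matrix (Fin n) (Fin n) ℚ) (x y : V n p) :
    form n p B x y = Matrix.toBilin' (B.map (redQ p)) x y := by
  rw [form, Matrix.toBilin'_apply]
  rfl

lemma basisVec_eq_basisFun : basisVec n p = Pi.basisFun (ZMod p) (Fin n) :=
  funext fun i => (Pi.basisFun_apply (ZMod p) (Fin n) i).symm

lemma sum_smul_basisVec (x : V n p) : ∑ m, x m • basisVec n p m = x := by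
  simpa [basisVec_eq_basisFun] using (Pi.basisFun (ZMod p) (Fin n)).sum_repr x

lemma mem_spanV {S : Set (Fin n)} {x : V n p} : x ∈ spanV n p S ↔ ∀ i ∉ S, x i = 0 := by
  rw [spanV, basisVec_eq_basisFun, Module.Basis.mem_span_image, Finsupp.support_subset_iff]
  simp only [Pi.basisFun_repr]

lemma spanV_inter (S T : Set (Fin n)) : spanV n p (S ∩ T) = spanV n p S ⊓ spanV n p T := by
  ext x
  simp only [Submodule.mem_inf, mem_spanV, Set.mem_inter_iff, not_and_or]
  exact ⟨fun h => ⟨fun i hi => h i (.inl hi), fun i hi => h i (.inr hi)⟩,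
    fun h i => Or.rec (h.1 i) (h.2 i)⟩

lemma ReflHyp.apply_eq {B : Matrix (Fin n) (Fin n) ℚ} {r : Fin n → GLV n p}
    (hr : ReflHyp n p B r) (i : Fin n) (x : V n p) :
    (r i).1 x = x - (∑ m, x m * redQ p (2 * B i m / B i i)) • basisVec n p i := by
  conv_lhs => rw [← sum_smul_basisVec x, map_sum]
  simp_rw [map_smul, hr i, smul_sub, Finset.sum_sub_distrib, sum_smul_basisVec, smul_smul,
    ← Finset.sum_smul]

lemma ReflHyp.mem_OV [Fact p.Prime] (hodd : p ≠ 2) {B : Matrix (Fin n) (Fin n) ℚ}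
    (hB : GramOK n B) (hint : PIntegral n p B) {r : Fin n → GLV n p} (hr : ReflHyp n p B r)
    (i : Fin n) : r i ∈ OV n p B := by
  have h2 : (2 : ZMod p) ≠ 0 := Ring.two_ne_zero (by rwa [ZMod.ringChar_zmod_n])
  suffices (Matrix.toBilin' (B.map (redQ p))).compl₁₂ (r i).1 (r i).1 =
      Matrix.toBilin' (B.map (redQ p)) by
    intro x y
    simpa only [form_eq_toBilin', LinearMap.compl₁₂_apply] using LinearMap.congr_fun₂ this x y
  refine LinearMap.BilinForm.ext_basis (Pi.basisFun (ZMod p) (Fin n)) fun j k => ?_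
  rw [LinearMap.compl₁₂_apply, ← basisVec_eq_basisFun, hr, hr]
  simp only [map_sub, map_smul, LinearMap.sub_apply, LinearMap.smul_apply, basisVec,
    Matrix.toBilin'_single, Matrix.map_apply, smul_eq_mul]
  rw [hB.1 j i]
  apply mul_left_cancel₀ h2
  linear_combination (-redQ p (2 * B i k / B i i)) * two_mul_redQ hB hint i j
    + (-redQ p (2 * B i j / B i i)) * two_mul_redQ hB hint i k

lemma ReflHyp.commutesWhenSeparated {B : Matrix (Fin n) (Fin n) ℚ} (hB : GramOK n B)
    {r : Fin n → GLV n p} (hr : ReflHyp n p B r) : CommutesWhenSeparated r := by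
  intro i k j hik hkj
  have hcartan : ∀ a b : Fin n, (a : ℕ) + 1 < b ∨ (b : ℕ) + 1 < a →
      redQ p (2 * B a b / B a a) = 0 := fun a b hab => by
    rw [hB.2.1 a b (by rw [lt_abs]; omega)]
    simp [redQ]
  have hij := hcartan i j (.inl (by omega))
  have hji := hcartan j i (.inr (by omega))
  refine Units.ext ((Pi.basisFun (ZMod p) (Fin n)).ext fun m => ?_)
  rw [← basisVec_eq_basisFun]
  simp only [Units.val_mul, Module.End.mul_apply, hr i, hr j, map_sub, map_smul, hij, hji,
    zero_smul, sub_zero]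
  abel

lemma ReflHyp.closure_le_OV [Fact p.Prime] (hodd : p ≠ 2) {B : Matrix (Fin n) (Fin n) ℚ}
    (hB : GramOK n B) (hint : PIntegral n p B) {r : Fin n → GLV n p} (hr : ReflHyp n p B r)
    (S : Set (Fin n)) : Subgroup.closure (r '' S) ≤ OV n p B := by
  rw [Subgroup.closure_le]
  rintro _ ⟨i, -, rfl⟩
  exact hr.mem_OV hodd hB hint i

lemma ReflHyp.closure_le_trivialOnQuotient {B : Matrix (Fin n) (Fin n) ℚ}
    {r : Fin n → GLV n p} (hr : ReflHyp n p B r) (S : Set (Fin n)) :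
    Subgroup.closure (r '' S) ≤ trivialOnQuotient (spanV n p S) := by
  rw [Subgroup.closure_le]
  rintro _ ⟨i, hi, rfl⟩ x
  rw [hr.apply_eq, sub_sub_cancel_left]
  exact neg_mem (Submodule.smul_mem _ _ (Submodule.subset_span ⟨i, hi, rfl⟩))

lemma mem_OSub_of_mem_trivialOnQuotient {B : Matrix (Fin n) (Fin n) ℚ}
    {W : Submodule (ZMod p) (V n p)} (hW : Nonsing n p B W) {g : GLV n p} (hg : g ∈ OV n p B)
    (hgW : g ∈ trivialOnQuotient W) : g ∈ OSub n p B W := by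
  refine ⟨hg, map_eq_of_mem_trivialOnQuotient hgW, fun u hu => ?_⟩
  -- `g u - u` lies in `W`, and is orthogonal to `W` because `g⁻¹` preserves `W`
  refine sub_eq_zero.1 (hW _ (hgW u) fun w hw => ?_)
  have hgw : form n p B (g.1 u) w = 0 := by
    rw [← units_apply_inv_apply g w, hg]
    exact hu _ (apply_mem_of_mem_trivialOnQuotient (inv_mem hgW) hw)
  rw [form_eq_toBilin', map_sub, LinearMap.sub_apply, ← form_eq_toBilin', ← form_eq_toBilin',
    hgw, hu w hw, sub_zero]

lemma inf_closure_image_eq_of_eq_OSub [Fact p.Prime] (hodd : p ≠ 2)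
    {B : Matrix (Fin n) (Fin n) ℚ} (hB : GramOK n B) (hint : PIntegral n p B)
    {r : Fin n → GLV n p} (hr : ReflHyp n p B r) {S T : Set (Fin n)}
    (hns : Nonsing n p B (spanV n p (S ∩ T)))
    (hfull : Subgroup.closure (r '' (S ∩ T)) = OSub n p B (spanV n p (S ∩ T))) :
    Subgroup.closure (r '' S) ⊓ Subgroup.closure (r '' T) =
      Subgroup.closure (r '' (S ∩ T)) := by
  refine le_antisymm (fun g hg => ?_) (closure_image_inter_le r S T)
  rw [Subgroup.mem_inf] at hg
  rw [hfull]
  refine mem_OSub_of_mem_trivialOnQuotient hns (hr.closure_le_OV hodd hB hint S hg.1) ?_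
  rw [spanV_inter]
  exact fun x =>
    ⟨hr.closure_le_trivialOnQuotient S hg.1 x, hr.closure_le_trivialOnQuotient T hg.2 x⟩

lemma setOf_val_ne_zero_eq_not_isMin : {i : Fin n | (i : ℕ) ≠ 0} = {i | ¬IsMin i} := by
  ext i
  refine not_congr ⟨fun h j _ => ?_, fun h => ?_⟩
  · rw [Fin.le_def, h]
    exact Nat.zero_le _
  · exact Nat.le_zero.1 (h (show ⟨0, i.pos⟩ ≤ i from Nat.zero_le _))

lemma setOf_val_ne_sub_one_eq_not_isMax : {i : Fin n | (i : ℕ) ≠ n - 1} = {i | ¬IsMax i} := by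
  ext i
  refine not_congr ⟨fun h j _ => ?_, fun h => ?_⟩
  · rw [Fin.le_def, h]
    omega
  · have hlt := i.isLt
    have := h (show i ≤ ⟨n - 1, by omega⟩ from Fin.le_def.2 (by dsimp only; omega))
    rw [Fin.le_def] at this
    dsimp only at this
    omega

end Reduction

theorem statement1_general
    (n p : ℕ) (hp : p.Prime) (hodd : p ≠ 2)
    (B : Matrix (Fin n) (Fin n) ℚ)
    (hB : GramOK n B) (hint : PIntegral n p B)
    (r : Fin n → GLV n p) (hr : ReflHyp n p B r)
    (h0 : IsStringC n p r {i : Fin n | (i : ℕ) ≠ 0})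
    (hn1 : IsStringC n p r {i : Fin n | (i : ℕ) ≠ n - 1})
    (hns : Nonsing n p B (spanV n p {i : Fin n | (i : ℕ) ≠ 0 ∧ (i : ℕ) ≠ n - 1}))
    (hfull : Subgroup.closure (r '' {i : Fin n | (i : ℕ) ≠ 0 ∧ (i : ℕ) ≠ n - 1}) = OSub n p B (spanV n p {i : Fin n | (i : ℕ) ≠ 0 ∧ (i : ℕ) ≠ n - 1})) :
    IsStringC n p r Set.univ := by
  have : Fact p.Prime := ⟨hp⟩
  have hmid := inf_closure_image_eq_of_eq_OSub hodd hB hint hr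
    (S := {i : Fin n | (i : ℕ) ≠ 0}) (T := {i : Fin n | (i : ℕ) ≠ n - 1}) hns hfull
  simp only [setOf_val_ne_zero_eq_not_isMin, setOf_val_ne_sub_one_eq_not_isMax] at h0 hn1 hmid
  exact intersectionProperty_univ (hr.commutesWhenSeparated hB) h0 hn1 hmid

/-- if `G₀ᵖ`, `G_{n-1}ᵖ` are string C-groups, `V_{0,n-1}` is nonsingular
and `G_{0,n-1}ᵖ` is the full orthogonal group on `V_{0,n-1}`, then `Gᵖ` is a
string C-group. -/
theorem statement1
    (n p : ℕ) (hn : 3 ≤ n) (hp : p.Prime) (hodd : p ≠ 2)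
    (B : Matrix (Fin n) (Fin n) ℚ)
    (hB : GramOK n B) (hint : PIntegral n p B)
    (r : Fin n → GLV n p) (hr : ReflHyp n p B r)
    (h0 : IsStringC n p r {i : Fin n | (i : ℕ) ≠ 0})
    (hn1 : IsStringC n p r {i : Fin n | (i : ℕ) ≠ n - 1})
    (hns : Nonsing n p B (spanV n p {i : Fin n | (i : ℕ) ≠ 0 ∧ (i : ℕ) ≠ n - 1}))
    (hfull : Subgroup.closure (r '' {i : Fin n | (i : ℕ) ≠ 0 ∧ (i : ℕ) ≠ n - 1}) = OSub n p B (spanV n p {i : Fin n | (i : ℕ) ≠ 0 ∧ (i : ℕ) ≠ n - 1})) :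
    IsStringC n p r Set.univ :=
  statement1_general n p hp hodd B hB hint r hr h0 hn1 hns hfull

end Statement1
end

section
/- For every n ≥ 2 and every choice of labels p_1,…,p_{n−1} ∈ {3, ∞}, the group G^3 = [p_1,…,p_{n−1}]^3 ≤ GL_n(ZMod 3) is isomorphic, as an abstract group, to the symmetric group S_{n+1} on n+1 letters; in particular its order is (n+1)!, independently of the allocation of the branch labels. -/
/-!
Put `s_i = e_1 ⋯ e_i` and let `T` send `b_i` to `s_i (ε_i - ε_{i+1}) ∈ (ZMod 3)^{n+1}`. The simple
roots `ε_i - ε_{i+1}` of `A_n` are linearly independent, so `T` is injective, and the signs `s_i`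
absorb the labels `e_i`, so that `x·y = 2 (T x ⬝ T y)`. As `2 = -1` in `ZMod 3`, `T` therefore
conjugates `r_i` into the transposition of the coordinates `i` and `i + 1`. The pairs `(g, σ)` with
`T (g x) = T x ∘ σ⁻¹` form a subgroup of `GL(V) × S_{n+1}` on which both projections are injective
(`T` is injective, and only the identity fixes every simple root), and the pairs `(r_i, (i i+1))`
generate a subgroup of it that projects onto `G³` and onto `S_{n+1}`.
-/

open Equiv Matrix

theorem Equiv.Perm.eq_one_of_apply_castSucc {n : ℕ} (σ : Perm (Fin (n + 1)))
    (h : ∀ i : Fin n, σ i.castSucc = i.castSucc) : σ = 1 := by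
  have hlast : σ (Fin.last n) = Fin.last n := by
    induction hσ : σ (Fin.last n) using Fin.lastCases with
    | last => rfl
    | cast i => exact absurd (σ.injective (hσ.trans (h i).symm)) (Fin.castSucc_lt_last i).ne'
  ext j
  induction j using Fin.lastCases with
  | last => simp [hlast]
  | cast i => simp [h i]

theorem Fin.eq_zero_of_cons_zero_eq_snoc_zero {M : Type*} [Zero M] :
    ∀ {n : ℕ} (z : Fin n → M), (Fin.cons 0 z : Fin (n + 1) → M) = Fin.snoc z 0 → z = 0
  | 0, z, _ => Subsingleton.elim _ _
  | n + 1, z, h => by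
    rw [← Fin.cons_self_tail z, ← Fin.cons_snoc_eq_snoc_cons, Fin.cons_inj] at h
    obtain ⟨hz₀, htail⟩ := h
    rw [← hz₀] at htail
    rw [← Fin.cons_self_tail z, ← hz₀, Fin.eq_zero_of_cons_zero_eq_snoc_zero _ htail]
    exact Fin.cons_self_tail 0

section SimpleRoot

variable {R : Type*} [CommRing R] {n : ℕ}

def simpleRoot (i : Fin n) : Fin (n + 1) → R := Pi.single i.castSucc 1 - Pi.single i.succ 1

theorem sum_smul_simpleRoot (z : Fin n → R) :
    ∑ i, z i • simpleRoot i = Fin.snoc z 0 - (Fin.cons 0 z : Fin (n + 1) → R) := by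
  ext j
  simp only [simpleRoot, Finset.sum_apply, Pi.sub_apply, Pi.smul_apply, smul_sub,
    Pi.single_apply, smul_eq_mul, mul_ite, mul_one, mul_zero, Finset.sum_sub_distrib]
  congr 1
  · induction j using Fin.lastCases with
    | last =>
      simp only [Fin.snoc_last]
      exact Finset.sum_eq_zero fun i _ => if_neg (Fin.castSucc_lt_last i).ne'
    | cast k => simp
  · induction j using Fin.cases with
    | zero =>
      simp only [Fin.cons_zero]
      exact Finset.sum_eq_zero fun i _ => if_neg (Fin.succ_ne_zero i).symm
    | succ k => simp

theorem linearIndependent_simpleRoot : LinearIndependent R (simpleRoot (R := R) (n := n)) := by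
  rw [Fintype.linearIndependent_iff]
  intro z hz
  rw [sum_smul_simpleRoot, sub_eq_zero] at hz
  exact congrFun (Fin.eq_zero_of_cons_zero_eq_snoc_zero z hz.symm)

theorem simpleRoot_dotProduct_simpleRoot (i j : Fin n) :
    simpleRoot i ⬝ᵥ simpleRoot j = (if i = j then 2 else if (j : ℕ) = i + 1 then -1
      else if (i : ℕ) = j + 1 then -1 else 0 : R) := by
  simp only [simpleRoot, sub_dotProduct, dotProduct_sub, single_dotProduct, Pi.single_apply,
    Fin.ext_iff, Fin.val_castSucc, Fin.val_succ]
  split_ifs <;> first | omega | norm_num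

theorem eq_castSucc_of_simpleRoot_apply_eq_one (h2 : (2 : R) ≠ 0) {i : Fin n} {k : Fin (n + 1)}
    (h : simpleRoot i k = (1 : R)) : k = i.castSucc := by
  by_contra hk
  simp only [simpleRoot, Pi.sub_apply, Pi.single_apply, if_neg hk] at h
  split_ifs at h
  · exact h2 (by linear_combination -h)
  · exact h2 (by linear_combination -2 * h)

theorem comp_swap_eq_sub_smul {ι : Type*} [DecidableEq ι] (y : ι → R) (a b : ι) :
    y ∘ swap a b = y - (y a - y b) • (Pi.single a 1 - Pi.single b 1) := by
  ext j
  simp only [Function.comp_apply, swap_apply_def, Pi.sub_apply, Pi.smul_apply, Pi.single_apply,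
    smul_eq_mul]
  split_ifs <;> subst_vars <;> ring

end SimpleRoot

section Intertwiners

variable {G V ι β : Type*} [Group G] [MulAction G V]

variable (G) in
def intertwiners (T : V → ι → β) : Subgroup (G × Perm ι) where
  carrier := {p | ∀ x j, T (p.1 • x) (p.2 j) = T x j}
  one_mem' _ _ := by simp
  mul_mem' {p q} hp hq x j := by
    simp only [Prod.fst_mul, Prod.snd_mul, mul_smul, Perm.mul_apply]
    rw [hp, hq]
  inv_mem' {p} hp x j := by
    simpa using (hp (p.1⁻¹ • x) (p.2⁻¹ j)).symm

theorem mem_intertwiners {T : V → ι → β} {p : G × Perm ι} :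
    p ∈ intertwiners G T ↔ ∀ x j, T (p.1 • x) (p.2 j) = T x j := Iff.rfl

end Intertwiners

theorem Subgroup.nonempty_closure_image_fst_mulEquiv_closure_image_snd {G H : Type*} [Group G]
    [Group H] (Γ : Subgroup (G × H)) (hfst : ∀ h, ((1 : G), h) ∈ Γ → h = 1)
    (hsnd : ∀ g, (g, (1 : H)) ∈ Γ → g = 1) {s : Set (G × H)} (hs : s ⊆ Γ) :
    Nonempty (Subgroup.closure (Prod.fst '' s) ≃* Subgroup.closure (Prod.snd '' s)) := by
  have hΓ : Subgroup.closure s ≤ Γ := (Subgroup.closure_le Γ).mpr hs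
  let f₁ := (MonoidHom.fst G H).comp (Subgroup.closure s).subtype
  let f₂ := (MonoidHom.snd G H).comp (Subgroup.closure s).subtype
  have hf₁ : Function.Injective f₁ := by
    rw [injective_iff_map_eq_one]
    rintro ⟨⟨g, h⟩, hp⟩ (rfl : g = 1)
    simp [hfst h (hΓ hp)]
  have hf₂ : Function.Injective f₂ := by
    rw [injective_iff_map_eq_one]
    rintro ⟨⟨g, h⟩, hp⟩ (rfl : h = 1)
    simp [hsnd g (hΓ hp)]
  have hr₁ : f₁.range = Subgroup.closure (Prod.fst '' s) := by
    rw [MonoidHom.range_comp, Subgroup.range_subtype, MonoidHom.map_closure]; rfl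
  have hr₂ : f₂.range = Subgroup.closure (Prod.snd '' s) := by
    rw [MonoidHom.range_comp, Subgroup.range_subtype, MonoidHom.map_closure]; rfl
  exact ⟨(MulEquiv.subgroupCongr hr₁.symm).trans <| (MonoidHom.ofInjective hf₁).symm.trans <|
    (MonoidHom.ofInjective hf₂).trans (MulEquiv.subgroupCongr hr₂)⟩

namespace Statement15

def gram (n : ℕ) (e : ℕ → ZMod 3) : Matrix (Fin n) (Fin n) (ZMod 3) :=
  fun i j =>
    if i = j then 1
    else if (j : ℕ) = (i : ℕ) + 1 then e (j : ℕ)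
    else if (i : ℕ) = (j : ℕ) + 1 then e (i : ℕ)
    else 0

def form (n : ℕ) (e : ℕ → ZMod 3) (x y : Fin n → ZMod 3) : ZMod 3 :=
  ∑ i, ∑ j, x i * gram n e i j * y j

def signProd (e : ℕ → ZMod 3) (i : ℕ) : ZMod 3 := ∏ k ∈ Finset.range i, e (k + 1)

theorem signProd_succ (e : ℕ → ZMod 3) (i : ℕ) :
    signProd e (i + 1) = signProd e i * e (i + 1) :=
  Finset.prod_range_succ _ _

theorem signProd_mul_self {e : ℕ → ZMod 3} {i : ℕ} (h : ∀ k < i, e (k + 1) * e (k + 1) = 1) :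
    signProd e i * signProd e i = 1 := by
  rw [signProd, ← Finset.prod_mul_distrib]
  exact Finset.prod_eq_one fun k hk => h k (Finset.mem_range.mp hk)

def rootEmbedding (n : ℕ) (e : ℕ → ZMod 3) :
    (Fin n → ZMod 3) →ₗ[ZMod 3] (Fin (n + 1) → ZMod 3) :=
  Fintype.linearCombination (ZMod 3) fun i => signProd e i • simpleRoot i

section RootEmbedding

variable {n : ℕ} {e : ℕ → ZMod 3}

theorem rootEmbedding_single (i : Fin n) :
    rootEmbedding n e (Pi.single i 1) = signProd e i • simpleRoot i := by
  rw [rootEmbedding, Fintype.linearCombination_apply_single, one_smul]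

theorem rootEmbedding_injective (hsgn : ∀ i : Fin n, signProd e i * signProd e i = 1) :
    Function.Injective (rootEmbedding n e) :=
  (linearIndependent_simpleRoot.units_smul
    fun i => Units.mkOfMulEqOne _ _ (hsgn i)).fintypeLinearCombination_injective

theorem gram_eq_signProd_mul_dotProduct (hsgn : ∀ i : Fin n, signProd e i * signProd e i = 1)
    (i j : Fin n) :
    gram n e i j = 2 * signProd e i * signProd e j * (simpleRoot i ⬝ᵥ simpleRoot j) := by
  have h3 : (3 : ZMod 3) = 0 := by decide
  rw [simpleRoot_dotProduct_simpleRoot, gram]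
  split_ifs with hij hji hij'
  · subst hij
    linear_combination (-4) * hsgn i - h3
  · rw [hji, signProd_succ]
    linear_combination 2 * e (i + 1) * hsgn i + e (i + 1) * h3
  · rw [hij', signProd_succ]
    linear_combination 2 * e (j + 1) * hsgn j + e (j + 1) * h3
  · ring

theorem form_eq_two_mul_dotProduct (hsgn : ∀ i : Fin n, signProd e i * signProd e i = 1)
    (x y : Fin n → ZMod 3) :
    form n e x y = 2 * (rootEmbedding n e x ⬝ᵥ rootEmbedding n e y) := by
  simp only [rootEmbedding, Fintype.linearCombination_apply, sum_dotProduct, dotProduct_sum,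
    smul_dotProduct, dotProduct_smul, smul_eq_mul, form, Finset.mul_sum,
    gram_eq_signProd_mul_dotProduct hsgn]
  rw [Finset.sum_comm]
  refine Finset.sum_congr rfl fun i _ => Finset.sum_congr rfl fun j _ => ?_
  rw [dotProduct_comm]
  ring

theorem rootEmbedding_reflection (hsgn : ∀ i : Fin n, signProd e i * signProd e i = 1)
    (i : Fin n) (x : Fin n → ZMod 3) :
    rootEmbedding n e (x - (2 * form n e x (Pi.single i 1)) • Pi.single i 1) =
      rootEmbedding n e x ∘ swap i.castSucc i.succ := by
  have h3 : (3 : ZMod 3) = 0 := by decide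
  set y := rootEmbedding n e x
  rw [comp_swap_eq_sub_smul, map_sub, map_smul, form_eq_two_mul_dotProduct hsgn,
    rootEmbedding_single, smul_smul, dotProduct_smul, simpleRoot, dotProduct_sub,
    dotProduct_single, dotProduct_single, smul_eq_mul]
  congr 2
  linear_combination 4 * (y i.castSucc - y i.succ) * hsgn i + (y i.castSucc - y i.succ) * h3

theorem eq_one_of_rootEmbedding_apply_perm (hsgn : ∀ i : Fin n, signProd e i * signProd e i = 1)
    {σ : Perm (Fin (n + 1))} (h : ∀ x j, rootEmbedding n e x (σ j) = rootEmbedding n e x j) :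
    σ = 1 := by
  refine σ.eq_one_of_apply_castSucc fun i => eq_castSucc_of_simpleRoot_apply_eq_one
    (by decide : (2 : ZMod 3) ≠ 0) ?_
  have hi := congrArg (signProd e i * ·) (h (Pi.single i 1) i.castSucc)
  simp only [rootEmbedding_single, Pi.smul_apply, smul_eq_mul, ← mul_assoc, hsgn i,
    one_mul] at hi
  simpa [simpleRoot, Pi.single_eq_of_ne Fin.castSucc_lt_succ.ne] using hi

end RootEmbedding

theorem statement15_general (n : ℕ) (e : ℕ → ZMod 3)
    (he : ∀ i : ℕ, 1 ≤ i → i ≤ n - 1 → e i = 1 ∨ e i = -1)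
    (r : Fin n → (Module.End (ZMod 3) (Fin n → ZMod 3))ˣ)
    (hr : ∀ i x, (r i).1 x =
      x - (2 * form n e x (Pi.single i 1)) • (Pi.single i 1 : Fin n → ZMod 3)) :
    Nonempty (Subgroup.closure (Set.range r) ≃* Equiv.Perm (Fin (n + 1))) ∧
    Nat.card (Subgroup.closure (Set.range r)) = Nat.factorial (n + 1) := by
  have hsgn (i : Fin n) : signProd e i * signProd e i = 1 := signProd_mul_self fun k hk => by
    rcases he (k + 1) (by omega) (by omega) with h | h <;> rw [h] <;> decide
  let s := Set.range fun i : Fin n => (r i, swap i.castSucc i.succ)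
  have hs : s ⊆ intertwiners (Module.End (ZMod 3) (Fin n → ZMod 3))ˣ (rootEmbedding n e) := by
    rintro _ ⟨i, rfl⟩ x j
    simp [Units.smul_def, hr, rootEmbedding_reflection hsgn]
  obtain ⟨φ⟩ := Subgroup.nonempty_closure_image_fst_mulEquiv_closure_image_snd _
    (fun σ hσ => eq_one_of_rootEmbedding_apply_perm hsgn (by simpa [mem_intertwiners] using hσ))
    (fun g hg => eq_of_smul_eq_smul fun x => rootEmbedding_injective hsgn
      (by simpa using funext ((mem_intertwiners.mp hg) x))) hs
  have hfst : Subgroup.closure (Prod.fst '' s) = Subgroup.closure (Set.range r) := by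
    rw [← Set.range_comp]; rfl
  have hsnd : Subgroup.closure (Prod.snd '' s) = ⊤ := by
    rw [← Set.range_comp]
    exact Subgroup.closure_eq_top_of_mclosure_eq_top (Perm.mclosure_swap_castSucc_succ n)
  let ψ := (MulEquiv.subgroupCongr hfst.symm).trans <|
    φ.trans <| (MulEquiv.subgroupCongr hsnd).trans Subgroup.topEquiv
  exact ⟨⟨ψ⟩, by rw [Nat.card_congr ψ.toEquiv, Nat.card_perm, Nat.card_fin]⟩

/-- for every `n ≥ 2` and every allocation of the branch labels
`p_i ∈ {3, ∞}`, the group `G³ = [p₁, …, p_{n−1}]³` is isomorphic to the symmetric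
group `S_{n+1}`; in particular its order is `(n+1)!`. -/
theorem statement15 (n : ℕ) (hn : 2 ≤ n) (e : ℕ → ZMod 3)
    (he : ∀ i : ℕ, 1 ≤ i → i ≤ n - 1 → e i = 1 ∨ e i = -1)
    (r : Fin n → (Module.End (ZMod 3) (Fin n → ZMod 3))ˣ)
    (hr : ∀ i x, (r i).1 x =
      x - (2 * form n e x (Pi.single i 1)) • (Pi.single i 1 : Fin n → ZMod 3)) :
    Nonempty (Subgroup.closure (Set.range r) ≃* Equiv.Perm (Fin (n + 1))) ∧
    Nat.card (Subgroup.closure (Set.range r)) = Nat.factorial (n + 1) :=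
  statement15_general n e he r hr

end Statement15
end
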